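/- arXiv:2210.15403 — 4 statements merged into one kernel-verified Lean document; each statement's English description precedes it below -/
import Mathlib

section
/- Let H be a Hopf algebra, A an associative (possibly nonunital) algebra with trivial right annihilator (r(A)=0), and let ·: H⊗A → A be a linear map. Define on the vector space A⊗H the multiplication (a#h)(b#k) = Σ a(h₁·b) # h₂k. Then this multiplication is associative if and only if h·(a(k·b)) = Σ (h₁·a)(h₂k·b) for all h,k ∈ H and a,b ∈ A. -/
/-!
Collapsing the `H`-factor with the counit turns `(a₀ # h)((a # g)(b # 1))` into
`a₀ (h · (a (g · b)))` and `((a₀ # h)(a # g))(b # 1)` into `a₀ Σ (h₁ · a)(h₂ g · b)`.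
So associativity gives the partial action axiom after left multiplication by an arbitrary `a₀`,
and `r(A) = 0` cancels `a₀`.

Conversely, multiplicativity of `Δ` gives
`((a # h)(b # g))(c # l) = Σ a (h₁ · b)(h₂ g₁ · c) # h₃ g₂ l` read off `(id ⊗ Δ) Δ h`, while the
axiom, applied to `h₁ · (b (g₁ · c))`, gives the same expression for `(a # h)((b # g)(c # l))`
read off `(Δ ⊗ id) Δ h`; coassociativity identifies the two.
-/

open TensorProduct

section PartialHopfPrelude

variable (k : Type) [Field k] (H : Type) [Ring H] [HopfAlgebra k H]

/-- Sweedler-style sum `Σ f h₁ h₂` over the comultiplication of `h`. -/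
noncomputable def sweedler {M : Type} [AddCommGroup M] [Module k M]
    (f : H →ₗ[k] H →ₗ[k] M) (h : H) : M :=
  TensorProduct.lift f (Coalgebra.comul h)

variable {A : Type} [AddCommGroup A] [Module k A]

/-- `Σ (h₁ · a) * (h₂ g · b)`, with an explicit multiplication `mA` on `A`. -/
noncomputable def paRhs (mA : A →ₗ[k] A →ₗ[k] A) (act : H →ₗ[k] A →ₗ[k] A)
    (h g : H) (a b : A) : A :=
  sweedler k H ((mA.comp (act.flip a)).compl₂ ((act.flip b).comp (LinearMap.mulRight k g))) h

/-- `Σ (h₁ g · b) * (h₂ · a)`, with an explicit multiplication `mA` on `A`. -/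
noncomputable def paSymmRhs (mA : A →ₗ[k] A →ₗ[k] A) (act : H →ₗ[k] A →ₗ[k] A)
    (h g : H) (a b : A) : A :=
  sweedler k H ((mA.comp ((act.flip b).comp (LinearMap.mulRight k g))).compl₂ (act.flip a)) h

/-- A (left) partial action of the Hopf algebra `H` on `A`, where the (possibly nonunital,
possibly nonassociative) multiplication of `A` is given explicitly as a bilinear map `mA`:
`1_H · a = a` and `h · (a (g · b)) = Σ (h₁ · a)(h₂ g · b)`. -/
structure IsPartialActionOn (mA : A →ₗ[k] A →ₗ[k] A) (act : H →ₗ[k] A →ₗ[k] A) : Prop where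
  one_act : ∀ a : A, act 1 a = a
  act_assoc : ∀ (h g : H) (a b : A), act h (mA a (act g b)) = paRhs k H mA act h g a b

/-- A symmetrical partial action: additionally `h · ((g · b) a) = Σ (h₁ g · b)(h₂ · a)`. -/
structure IsSymmPartialActionOn (mA : A →ₗ[k] A →ₗ[k] A) (act : H →ₗ[k] A →ₗ[k] A)
    extends IsPartialActionOn k H mA act : Prop where
  act_symm : ∀ (h g : H) (a b : A), act h (mA (act g b) a) = paSymmRhs k H mA act h g a b

variable {B : Type} [NonUnitalRing B] [Module k B] [SMulCommClass k B B] [IsScalarTower k B B]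

/-- A partial action of `H` on the nonunital algebra `B` (with its own multiplication). -/
def IsPartialAction (act : H →ₗ[k] B →ₗ[k] B) : Prop :=
  IsPartialActionOn k H (LinearMap.mul k B) act

/-- A symmetrical partial action of `H` on the nonunital algebra `B`. -/
def IsSymmPartialAction (act : H →ₗ[k] B →ₗ[k] B) : Prop :=
  IsSymmPartialActionOn k H (LinearMap.mul k B) act

end PartialHopfPrelude

section Stmt0

variable {k : Type} [Field k] {H : Type} [Ring H] [HopfAlgebra k H]
variable {A : Type} [NonUnitalRing A] [Module k A] [SMulCommClass k A A] [IsScalarTower k A A]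

/-- `Σ a (h₁ · b) ⊗ (h₂ g)`, the defining formula for the smash product multiplication on
`A ⊗ H` on elementary tensors. -/
noncomputable def smashAux (act : H →ₗ[k] A →ₗ[k] A) (a : A) (h : H) (b : A) (g : H) :
    A ⊗[k] H :=
  TensorProduct.map ((LinearMap.mulLeft k a).comp (act.flip b)) (LinearMap.mulRight k g)
    (Coalgebra.comul h)

theorem TensorProduct.bilinear_assoc_of_tmul {R M N : Type*} [CommSemiring R]
    [AddCommMonoid M] [Module R M] [AddCommMonoid N] [Module R N]
    (μ : M ⊗[R] N →ₗ[R] M ⊗[R] N →ₗ[R] M ⊗[R] N)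
    (h : ∀ (m₁ m₂ m₃ : M) (n₁ n₂ n₃ : N),
      μ (μ (m₁ ⊗ₜ n₁) (m₂ ⊗ₜ n₂)) (m₃ ⊗ₜ n₃) =
        μ (m₁ ⊗ₜ n₁) (μ (m₂ ⊗ₜ n₂) (m₃ ⊗ₜ n₃)))
    (x y z : M ⊗[R] N) : μ (μ x y) z = μ x (μ y z) := by
  induction x using TensorProduct.induction_on with
  | zero => simp
  | add x₁ x₂ h₁ h₂ => simp [h₁, h₂]
  | tmul m₁ n₁ =>
    induction y using TensorProduct.induction_on with
    | zero => simp
    | add y₁ y₂ h₁ h₂ => simp [h₁, h₂]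
    | tmul m₂ n₂ =>
      induction z using TensorProduct.induction_on with
      | zero => simp
      | add z₁ z₂ h₁ h₂ => simp [h₁, h₂]
      | tmul m₃ n₃ => exact h m₁ m₂ m₃ n₁ n₂ n₃

section CounitRight

variable {R C : Type*} [CommSemiring R]

variable (R) in
noncomputable def counitRight [AddCommMonoid C] [Module R C] [CoalgebraStruct R C]
    (M : Type*) [AddCommMonoid M] [Module R M] : M ⊗[R] C →ₗ[R] M :=
  (TensorProduct.rid R M).toLinearMap ∘ₗ Coalgebra.counit.lTensor M

@[simp]
theorem counitRight_tmul [AddCommMonoid C] [Module R C] [CoalgebraStruct R C]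
    {M : Type*} [AddCommMonoid M] [Module R M] (m : M) (c : C) :
    counitRight R M (m ⊗ₜ[R] c) = Coalgebra.counit (R := R) c • m := by
  simp [counitRight]

@[simp]
theorem counitRight_comul [AddCommMonoid C] [Module R C] [Coalgebra R C] (c : C) :
    counitRight R C (Coalgebra.comul (R := R) c) = c := by
  simp [counitRight]

theorem counitRight_map_mulRight [Semiring C] [Bialgebra R C]
    {M : Type*} [AddCommMonoid M] [Module R M] (f : C →ₗ[R] M) (c : C) (w : C ⊗[R] C) :
    counitRight R M (TensorProduct.map f (LinearMap.mulRight R c) w) =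
      Coalgebra.counit (R := R) c • f (counitRight R C w) := by
  induction w using TensorProduct.induction_on with
  | zero => simp
  | tmul x y => simp [smul_smul, mul_comm]
  | add w₁ w₂ h₁ h₂ => simp [h₁, h₂]

end CounitRight

section SmashProduct

variable (act : H →ₗ[k] A →ₗ[k] A)
variable (μ : (A ⊗[k] H) →ₗ[k] (A ⊗[k] H) →ₗ[k] (A ⊗[k] H))

theorem counitRight_mu_tmul_one
    (hμ : ∀ (a : A) (h : H) (b : A) (g : H),
      μ (a ⊗ₜ[k] h) (b ⊗ₜ[k] g) = smashAux act a h b g)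
    (c : A) (w : A ⊗[k] H) :
    counitRight k A (μ w (c ⊗ₜ 1)) =
      TensorProduct.lift ((LinearMap.mul k A).compl₂ (act.flip c)) w := by
  induction w using TensorProduct.induction_on with
  | zero => simp
  | tmul a h => rw [hμ, smashAux, counitRight_map_mulRight]; simp
  | add w₁ w₂ h₁ h₂ => simp [h₁, h₂]

theorem lift_mul_act_smashAux (a₀ a b : A) (h g : H) :
    TensorProduct.lift ((LinearMap.mul k A).compl₂ (act.flip b)) (smashAux act a₀ h a g) =
      a₀ * paRhs k H (LinearMap.mul k A) act h g a b := by
  unfold smashAux paRhs sweedler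
  generalize Coalgebra.comul (R := k) h = w
  induction w using TensorProduct.induction_on with
  | zero => simp
  | tmul x y => simp [mul_assoc]
  | add w₁ w₂ h₁ h₂ => simp [h₁, h₂, mul_add]

theorem mul_act_mul_act_eq_mul_paRhs_of_assoc
    (hμ : ∀ (a : A) (h : H) (b : A) (g : H),
      μ (a ⊗ₜ[k] h) (b ⊗ₜ[k] g) = smashAux act a h b g)
    (hassoc : ∀ x y z : A ⊗[k] H, μ (μ x y) z = μ x (μ y z)) (a₀ a b : A) (h g : H) :
    a₀ * act h (a * act g b) = a₀ * paRhs k H (LinearMap.mul k A) act h g a b := by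
  have counitRight_mu_tmul_left : ∀ w, counitRight k A (μ (a₀ ⊗ₜ h) w) =
      a₀ * act h (counitRight k A w) := by
    intro w
    induction w using TensorProduct.induction_on with
    | zero => simp
    | tmul c l => simp [hμ, smashAux, counitRight_map_mulRight, mul_smul_comm]
    | add w₁ w₂ h₁ h₂ => simp [h₁, h₂, mul_add]
  have := congrArg (counitRight k A) (hassoc (a₀ ⊗ₜ h) (a ⊗ₜ g) (b ⊗ₜ 1))
  rwa [counitRight_mu_tmul_left, counitRight_mu_tmul_one act μ hμ,
    counitRight_mu_tmul_one act μ hμ, hμ, lift_mul_act_smashAux, TensorProduct.lift.tmul,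
    eq_comm] at this

/-- `u ⊗ (y ⊗ z) ↦ u (y · c) ⊗ z l`. -/
noncomputable def smashTail (c : A) (l : H) : A ⊗[k] (H ⊗[k] H) →ₗ[k] A ⊗[k] H :=
  TensorProduct.map (TensorProduct.lift ((LinearMap.mul k A).compl₂ (act.flip c)))
    (LinearMap.mulRight k l) ∘ₗ (TensorProduct.assoc k A H H).symm.toLinearMap

theorem smashAux_eq_smashTail (u c : A) (y l : H) :
    smashAux act u y c l = smashTail act c l (u ⊗ₜ Coalgebra.comul y) := by
  unfold smashAux
  generalize Coalgebra.comul (R := k) y = w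
  induction w using TensorProduct.induction_on with
  | zero => simp
  | tmul s t => simp [smashTail]
  | add w₁ w₂ h₁ h₂ => simp [h₁, h₂, tmul_add]

/-- `x ⊗ (y ⊗ z) ↦ Σ a (x · b)(y G₁ · c) ⊗ z G₂ l`: both triple products
`(a # h)(b # g)(c # l)` are this map at `G = Δ g`, applied to the two iterated
comultiplications of `h`. -/
noncomputable def smashTriple (a b c : A) (l : H) (G : H ⊗[k] H) :
    H ⊗[k] (H ⊗[k] H) →ₗ[k] A ⊗[k] H :=
  smashTail act c l ∘ₗ
    TensorProduct.map (LinearMap.mulLeft k a ∘ₗ act.flip b) (LinearMap.mulRight k G)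

theorem smashTriple_zero (a b c : A) (l : H) : smashTriple act a b c l 0 = 0 := by
  ext; simp [smashTriple]

theorem smashTriple_add (a b c : A) (l : H) (G₁ G₂ : H ⊗[k] H) :
    smashTriple act a b c l (G₁ + G₂) =
      smashTriple act a b c l G₁ + smashTriple act a b c l G₂ := by
  ext; simp [smashTriple, mul_add, tmul_add]

theorem mu_smashAux_tmul
    (hμ : ∀ (a : A) (h : H) (b : A) (g : H),
      μ (a ⊗ₜ[k] h) (b ⊗ₜ[k] g) = smashAux act a h b g)
    (a b c : A) (h g l : H) :
    μ (smashAux act a h b g) (c ⊗ₜ l) =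
      smashTriple act a b c l (Coalgebra.comul g)
        (Coalgebra.comul.lTensor H (Coalgebra.comul h)) := by
  unfold smashAux
  generalize Coalgebra.comul (R := k) h = w
  induction w using TensorProduct.induction_on with
  | zero => simp
  | tmul x y => simp [hμ, smashAux_eq_smashTail, smashTriple]
  | add w₁ w₂ h₁ h₂ => simp [h₁, h₂]

theorem paRhs_tmul_eq_smashTriple (a b c : A) (x u z v l : H) :
    (a * paRhs k H (LinearMap.mul k A) act x u b c) ⊗ₜ (z * (v * l)) =
      smashTriple act a b c l (u ⊗ₜ v)
        (TensorProduct.assoc k H H H (Coalgebra.comul x ⊗ₜ z)) := by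
  unfold paRhs sweedler
  generalize Coalgebra.comul (R := k) x = t
  induction t using TensorProduct.induction_on with
  | zero => simp
  | tmul p q => simp [smashTriple, smashTail, mul_assoc]
  | add t₁ t₂ h₁ h₂ => simp [h₁, h₂, add_tmul, mul_add]

theorem smashAux_mul_act_eq_smashTriple
    (hax : ∀ (h g : H) (a b : A),
      act h (a * act g b) = paRhs k H (LinearMap.mul k A) act h g a b)
    (a b c : A) (h u v l : H) :
    smashAux act a h (b * act u c) (v * l) =
      smashTriple act a b c l (u ⊗ₜ v)
        (TensorProduct.assoc k H H H (Coalgebra.comul.rTensor H (Coalgebra.comul h))) := by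
  unfold smashAux
  generalize Coalgebra.comul (R := k) h = w
  induction w using TensorProduct.induction_on with
  | zero => simp
  | tmul x z =>
    rw [map_tmul, LinearMap.rTensor_tmul, ← paRhs_tmul_eq_smashTriple, ← hax]
    rfl
  | add w₁ w₂ h₁ h₂ => simp only [map_add, h₁, h₂]

theorem mu_tmul_smashAux
    (hμ : ∀ (a : A) (h : H) (b : A) (g : H),
      μ (a ⊗ₜ[k] h) (b ⊗ₜ[k] g) = smashAux act a h b g)
    (hax : ∀ (h g : H) (a b : A),
      act h (a * act g b) = paRhs k H (LinearMap.mul k A) act h g a b)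
    (a b c : A) (h g l : H) :
    μ (a ⊗ₜ h) (smashAux act b g c l) =
      smashTriple act a b c l (Coalgebra.comul g)
        (TensorProduct.assoc k H H H (Coalgebra.comul.rTensor H (Coalgebra.comul h))) := by
  conv_lhs => unfold smashAux
  generalize Coalgebra.comul (R := k) g = G
  induction G using TensorProduct.induction_on with
  | zero => simp [smashTriple_zero]
  | tmul u v => simp [hμ, smashAux_mul_act_eq_smashTriple act hax]
  | add G₁ G₂ h₁ h₂ => simp [h₁, h₂, smashTriple_add]

end SmashProduct

/-- Let `H` be a Hopf algebra, `A` an associative (possibly nonunital)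
algebra with trivial right annihilator, and `act : H ⊗ A → A` a linear map.  The smash
product multiplication `(a # h)(b # g) = Σ a (h₁ · b) # h₂ g` on `A ⊗ H` is associative
if and only if `h · (a (g · b)) = Σ (h₁ · a)(h₂ g · b)` for all `h, g ∈ H`, `a, b ∈ A`. -/
theorem smash_product_assoc_iff_partial_action_axiom
    (act : H →ₗ[k] A →ₗ[k] A)
    (hr : ∀ a : A, (∀ b : A, b * a = 0) → a = 0)
    (μ : (A ⊗[k] H) →ₗ[k] (A ⊗[k] H) →ₗ[k] (A ⊗[k] H))
    (hμ : ∀ (a : A) (h : H) (b : A) (g : H),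
      μ (a ⊗ₜ[k] h) (b ⊗ₜ[k] g) = smashAux act a h b g) :
    (∀ x y z : A ⊗[k] H, μ (μ x y) z = μ x (μ y z)) ↔
      (∀ (h g : H) (a b : A),
        act h (a * act g b) = paRhs k H (LinearMap.mul k A) act h g a b) := by
  constructor
  · intro hassoc h g a b
    refine sub_eq_zero.mp (hr _ fun a₀ => ?_)
    rw [mul_sub, mul_act_mul_act_eq_mul_paRhs_of_assoc act μ hμ hassoc, sub_self]
  · intro hax
    refine TensorProduct.bilinear_assoc_of_tmul μ fun a b c h g l => ?_
    rw [hμ a h b g, hμ b g c l, mu_smashAux_tmul act μ hμ, mu_tmul_smashAux act μ hμ hax,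
      Coalgebra.coassoc_apply]

end Stmt0
end

section
/- Let H be a cocommutative Hopf algebra. If A and B are (symmetrical) partial H-module algebras, then the tensor product algebra A⊗B is a (symmetrical) partial H-module algebra via h·(a⊗b) = Σ (h₁·a)⊗(h₂·b). -/
open TensorProduct

/-! The map `h ↦ Σ (h₁ · a) ⊗ (h₂ · b)` is the comultiplication `Δ : H → H ⊗ H` followed by the
external action `(x ⊗ y) · (a ⊗ b) = (x · a) ⊗ (y · b)` of `H ⊗ H` on `A ⊗ B`. The external tensor
product of partial actions of `H` and `K` is a partial action of `H ⊗ K`, because the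
comultiplication of `H ⊗ K` interchanges the two middle legs of `Δ ⊗ Δ`, which is exactly how the
Sweedler sums of the two factors multiply in `A ⊗ B`. Partial actions pull back along bialgebra
maps, and for cocommutative `H` the comultiplication is a bialgebra map `H → H ⊗ H`. -/

namespace TensorProduct

variable {k : Type*} [CommSemiring k]
variable {M N P Q S T : Type*} [AddCommMonoid M] [Module k M] [AddCommMonoid N] [Module k N]
  [AddCommMonoid P] [Module k P] [AddCommMonoid Q] [Module k Q] [AddCommMonoid S] [Module k S]
  [AddCommMonoid T] [Module k T]

theorem map₂_flip (f : M →ₗ[k] P →ₗ[k] Q) (g : N →ₗ[k] S →ₗ[k] T) :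
    (map₂ f g).flip = map₂ f.flip g.flip :=
  ext' fun _ _ => ext' fun _ _ => rfl

theorem map₂_apply_tmul_eq_map_flip (f : M →ₗ[k] P →ₗ[k] Q) (g : N →ₗ[k] S →ₗ[k] T)
    (w : M ⊗[k] N) (p : P) (s : S) :
    map₂ f g w (p ⊗ₜ s) = map (f.flip p) (g.flip s) w := by
  induction w using TensorProduct.induction_on with
  | zero => simp
  | tmul x y => simp
  | add u v hu hv => simp [hu, hv]

theorem comm_tensorTensorTensorComm (x : M ⊗[k] N) (y : P ⊗[k] Q) :
    TensorProduct.comm k (M ⊗[k] P) (N ⊗[k] Q) (tensorTensorTensorComm k M N P Q (x ⊗ₜ y)) =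
      tensorTensorTensorComm k N M Q P
        (TensorProduct.comm k M N x ⊗ₜ TensorProduct.comm k P Q y) := by
  induction x using TensorProduct.induction_on with
  | zero => simp
  | add x₁ x₂ h₁ h₂ => simp only [add_tmul, map_add, h₁, h₂]
  | tmul m n =>
    induction y using TensorProduct.induction_on with
    | zero => simp
    | add y₁ y₂ h₁ h₂ => simp only [tmul_add, map_add, h₁, h₂]
    | tmul p q => rfl

end TensorProduct

theorem mul_tensorProduct_eq_map₂ {k A B : Type*} [CommSemiring k] [NonUnitalSemiring A]
    [Module k A] [SMulCommClass k A A] [IsScalarTower k A A] [NonUnitalSemiring B] [Module k B]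
    [SMulCommClass k B B] [IsScalarTower k B B] :
    LinearMap.mul k (A ⊗[k] B) = map₂ (LinearMap.mul k A) (LinearMap.mul k B) :=
  ext' fun _ _ => ext' fun _ _ => by simp

namespace PartialAction

variable {k : Type*} [CommSemiring k]
variable {H : Type*} [Semiring H] [Algebra k H] {K : Type*} [Semiring K] [Algebra k K]
variable {A : Type*} [AddCommMonoid A] [Module k A] {B : Type*} [AddCommMonoid B] [Module k B]

/-- `paRhs k H m act h g a b` is `sweedlerPairing m act g a b (Δ h)` by definition; bundling
makes it linear in `g`, `a` and `b`. -/
noncomputable def sweedlerPairing (m : A →ₗ[k] A →ₗ[k] A) (act : H →ₗ[k] A →ₗ[k] A) :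
    H →ₗ[k] A →ₗ[k] A →ₗ[k] H ⊗[k] H →ₗ[k] A where
  toFun g := LinearMap.mk₂ k
    (fun a b => lift ((m.comp (act.flip a)).compl₂ ((act.flip b).comp (LinearMap.mulRight k g))))
    (by intros; ext; simp) (by intros; ext; simp) (by intros; ext; simp) (by intros; ext; simp)
  map_add' := by intros; ext; simp [mul_add]
  map_smul' := by intros; ext; simp

@[simp]
theorem sweedlerPairing_tmul (m : A →ₗ[k] A →ₗ[k] A) (act : H →ₗ[k] A →ₗ[k] A)
    (g p q : H) (a b : A) :
    sweedlerPairing m act g a b (p ⊗ₜ q) = m (act p a) (act (q * g) b) :=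
  rfl

/-- The partial-action axiom with `Δ` replaced by an arbitrary `δ`; the symmetrical axiom is the
case of `m.flip` and `δ = τ ∘ Δ`, so both axioms are handled by one argument. -/
def SweedlerIdentity (m : A →ₗ[k] A →ₗ[k] A) (act : H →ₗ[k] A →ₗ[k] A)
    (δ : H →ₗ[k] H ⊗[k] H) : Prop :=
  ∀ (h g : H) (a b : A), act h (m a (act g b)) = sweedlerPairing m act g a b (δ h)

theorem SweedlerIdentity.comp {m : A →ₗ[k] A →ₗ[k] A} {act : K →ₗ[k] A →ₗ[k] A}
    {δH : H →ₗ[k] H ⊗[k] H} {δK : K →ₗ[k] K ⊗[k] K} (φ : H →ₐ[k] K)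
    (hφ : ∀ h, δK (φ h) = map φ.toLinearMap φ.toLinearMap (δH h))
    (hs : SweedlerIdentity m act δK) : SweedlerIdentity m (act ∘ₗ φ.toLinearMap) δH := by
  intro h g a b
  have hpull : sweedlerPairing m act (φ g) a b ∘ₗ map φ.toLinearMap φ.toLinearMap =
      sweedlerPairing m (act ∘ₗ φ.toLinearMap) g a b := by
    ext; simp
  simpa [hφ, ← hpull] using hs (φ h) (φ g) a b

variable {mA : A →ₗ[k] A →ₗ[k] A} {mB : B →ₗ[k] B →ₗ[k] B}
  {actA : H →ₗ[k] A →ₗ[k] A} {actB : K →ₗ[k] B →ₗ[k] B}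

theorem sweedlerPairing_map₂_comp_tensorTensorTensorComm (x : H) (y : K) (a c : A) (b d : B) :
    sweedlerPairing (map₂ mA mB) (map₂ actA actB) (x ⊗ₜ y) (a ⊗ₜ b) (c ⊗ₜ d) ∘ₗ
        (tensorTensorTensorComm k H H K K).toLinearMap =
      map (sweedlerPairing mA actA x a c) (sweedlerPairing mB actB y b d) := by
  ext; simp

theorem SweedlerIdentity.tensor {δH : H →ₗ[k] H ⊗[k] H} {δK : K →ₗ[k] K ⊗[k] K}
    {δ : H ⊗[k] K →ₗ[k] (H ⊗[k] K) ⊗[k] (H ⊗[k] K)}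
    (hδ : ∀ x y, δ (x ⊗ₜ y) = tensorTensorTensorComm k H H K K (δH x ⊗ₜ δK y))
    (hA : SweedlerIdentity mA actA δH) (hB : SweedlerIdentity mB actB δK) :
    SweedlerIdentity (map₂ mA mB) (map₂ actA actB) δ := by
  have hpure : ∀ (x : H) (y : K) (a c : A) (b d : B),
      (map₂ actA actB).flip (map₂ mA mB (a ⊗ₜ b) (map₂ actA actB (x ⊗ₜ y) (c ⊗ₜ d))) =
        sweedlerPairing (map₂ mA mB) (map₂ actA actB) (x ⊗ₜ y) (a ⊗ₜ b) (c ⊗ₜ d) ∘ₗ δ := by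
    intro x y a c b d
    refine TensorProduct.ext' fun p q => ?_
    simp only [LinearMap.flip_apply, map₂_apply_tmul, map_tmul, LinearMap.comp_apply, hδ,
      hA p x a c, hB q y b d]
    exact (LinearMap.congr_fun (sweedlerPairing_map₂_comp_tensorTensorTensorComm x y a c b d)
      (δH p ⊗ₜ δK q)).symm
  intro w G u v
  induction G using TensorProduct.induction_on generalizing u v with
  | zero => simp
  | add G₁ G₂ h₁ h₂ => simp only [map_add, LinearMap.add_apply, h₁, h₂]
  | tmul x y =>
    induction u using TensorProduct.induction_on generalizing v with
    | zero => simp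
    | add u₁ u₂ h₁ h₂ => simp only [map_add, LinearMap.add_apply, h₁, h₂]
    | tmul a b =>
      induction v using TensorProduct.induction_on with
      | zero => simp
      | add v₁ v₂ h₁ h₂ => simp only [map_add, LinearMap.add_apply, h₁, h₂]
      | tmul c d => exact LinearMap.congr_fun (hpure x y a c b d) w

end PartialAction

open PartialAction Coalgebra

section HopfActions

variable {k : Type} [Field k] {H : Type} [Ring H] [HopfAlgebra k H] {K : Type} [Ring K]
  [HopfAlgebra k K]
variable {A : Type} [AddCommGroup A] [Module k A] {m : A →ₗ[k] A →ₗ[k] A}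

theorem paSymmRhs_eq (act : H →ₗ[k] A →ₗ[k] A) (h g : H) (a b : A) :
    paSymmRhs k H m act h g a b =
      sweedlerPairing m.flip act g a b (TensorProduct.comm k H H (comul h)) := by
  have hcomm : sweedlerPairing m.flip act g a b ∘ₗ (TensorProduct.comm k H H).toLinearMap =
      lift ((m.comp ((act.flip b).comp (LinearMap.mulRight k g))).compl₂ (act.flip a)) :=
    ext' fun _ _ => rfl
  exact (LinearMap.congr_fun hcomm (comul h)).symm

theorem isPartialActionOn_iff (act : H →ₗ[k] A →ₗ[k] A) :
    IsPartialActionOn k H m act ↔ (∀ a, act 1 a = a) ∧ SweedlerIdentity m act comul :=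
  ⟨fun h => ⟨h.one_act, h.act_assoc⟩, fun h => ⟨h.1, h.2⟩⟩

theorem isSymmPartialActionOn_iff (act : H →ₗ[k] A →ₗ[k] A) :
    IsSymmPartialActionOn k H m act ↔
      IsPartialActionOn k H m act ∧
        SweedlerIdentity m.flip act ((TensorProduct.comm k H H).toLinearMap ∘ₗ comul) := by
  refine ⟨fun h => ⟨h.toIsPartialActionOn, fun h' g a b => ?_⟩,
    fun h => ⟨h.1, fun h' g a b => ?_⟩⟩
  · simpa [paSymmRhs_eq] using h.act_symm h' g a b
  · simpa [paSymmRhs_eq] using h.2 h' g a b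

theorem IsPartialActionOn.comp {act : K →ₗ[k] A →ₗ[k] A} (φ : H →ₐc[k] K)
    (hK : IsPartialActionOn k K m act) : IsPartialActionOn k H m (act ∘ₗ (φ : H →ₗ[k] K)) := by
  rw [isPartialActionOn_iff] at hK ⊢
  exact ⟨fun a => by simpa using hK.1 a,
    hK.2.comp (φ : H →ₐ[k] K) fun h => (CoalgHomClass.map_comp_comul_apply φ h).symm⟩

theorem IsSymmPartialActionOn.comp {act : K →ₗ[k] A →ₗ[k] A} (φ : H →ₐc[k] K)
    (hK : IsSymmPartialActionOn k K m act) :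
    IsSymmPartialActionOn k H m (act ∘ₗ (φ : H →ₗ[k] K)) := by
  rw [isSymmPartialActionOn_iff] at hK ⊢
  refine ⟨hK.1.comp φ, hK.2.comp (φ : H →ₐ[k] K) fun h => ?_⟩
  rw [LinearMap.comp_apply, LinearMap.comp_apply, LinearEquiv.coe_coe, LinearEquiv.coe_coe,
    map_comm]
  exact congrArg _ (CoalgHomClass.map_comp_comul_apply φ h).symm

end HopfActions

section TensorAlgebras

variable {k : Type} [Field k] {H : Type} [Ring H] [HopfAlgebra k H] {K : Type} [Ring K]
  [HopfAlgebra k K]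
variable {A : Type} [NonUnitalRing A] [Module k A] [SMulCommClass k A A] [IsScalarTower k A A]
variable {B : Type} [NonUnitalRing B] [Module k B] [SMulCommClass k B B] [IsScalarTower k B B]
variable {actA : H →ₗ[k] A →ₗ[k] A} {actB : K →ₗ[k] B →ₗ[k] B}

theorem IsPartialAction.tensor (hA : IsPartialAction k H actA) (hB : IsPartialAction k K actB) :
    IsPartialAction k (H ⊗[k] K) (map₂ actA actB) := by
  rw [IsPartialAction, isPartialActionOn_iff, mul_tensorProduct_eq_map₂] at *
  refine ⟨fun u => ?_, hA.2.tensor (fun _ _ => rfl) hB.2⟩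
  rw [Algebra.TensorProduct.one_def, map₂_apply_tmul, (LinearMap.ext hA.1 : actA 1 = .id),
    (LinearMap.ext hB.1 : actB 1 = .id)]
  simp

theorem IsSymmPartialAction.tensor (hA : IsSymmPartialAction k H actA)
    (hB : IsSymmPartialAction k K actB) :
    IsSymmPartialAction k (H ⊗[k] K) (map₂ actA actB) := by
  rw [IsSymmPartialAction, isSymmPartialActionOn_iff] at *
  refine ⟨IsPartialAction.tensor hA.1 hB.1, ?_⟩
  rw [mul_tensorProduct_eq_map₂, map₂_flip]
  refine hA.2.tensor (fun x y => ?_) hB.2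
  rw [LinearMap.comp_apply, LinearEquiv.coe_coe, TensorProduct.comul_tmul,
    AlgebraTensorModule.tensorTensorTensorComm_eq]
  exact comm_tensorTensorTensorComm (comul x) (comul y)

end TensorAlgebras

section Stmt4

variable {k : Type} [Field k] {H : Type} [Ring H] [HopfAlgebra k H]
variable {A : Type} [NonUnitalRing A] [Module k A] [SMulCommClass k A A] [IsScalarTower k A A]
variable {B : Type} [NonUnitalRing B] [Module k B] [SMulCommClass k B B] [IsScalarTower k B B]

/-- Let `H` be a cocommutative Hopf algebra.  If `A` and `B` are
(symmetrical) partial `H`-module algebras, then the tensor product algebra `A ⊗ B` is a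
(symmetrical) partial `H`-module algebra via `h · (a ⊗ b) = Σ (h₁ · a) ⊗ (h₂ · b)`. -/
theorem tensor_product_partial_action
    (hcocomm : ∀ h : H, (TensorProduct.comm k H H) (Coalgebra.comul h) = Coalgebra.comul h)
    (actA : H →ₗ[k] A →ₗ[k] A) (actB : H →ₗ[k] B →ₗ[k] B)
    (hA : IsPartialAction k H actA) (hB : IsPartialAction k H actB)
    (actT : H →ₗ[k] (A ⊗[k] B) →ₗ[k] (A ⊗[k] B))
    (hactT : ∀ (h : H) (a : A) (b : B),
      actT h (a ⊗ₜ[k] b) =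
        TensorProduct.map (actA.flip a) (actB.flip b) (Coalgebra.comul h)) :
    IsPartialAction k H actT ∧
      (IsSymmPartialAction k H actA → IsSymmPartialAction k H actB →
        IsSymmPartialAction k H actT) := by
  have : IsCocomm k H := ⟨LinearMap.ext hcocomm⟩
  have hT : actT = map₂ actA actB ∘ₗ comul :=
    LinearMap.ext fun h => ext' fun a b => by simp [hactT, map₂_apply_tmul_eq_map_flip]
  subst hT
  exact ⟨IsPartialActionOn.comp (Bialgebra.comulBialgHom k H) (hA.tensor hB),
    fun hAs hBs => IsSymmPartialActionOn.comp (Bialgebra.comulBialgHom k H) (hAs.tensor hBs)⟩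

end Stmt4
end

section
/- Let B be an H-module algebra with action ▷ and A an ideal of B. Suppose there exists a linear projection π: H▷A → H▷A with image A such that π(h▷(a·π(k▷b))) = Σ π(h₁▷a)·π(h₂k▷b) for all h,k ∈ H and a,b ∈ A. Then the map h ⇀ a := π(h▷a) defines a partial action of H on A. -/
open TensorProduct

section ModuleAlgebraPrelude

variable (k : Type) [Field k] (H : Type) [Ring H] [HopfAlgebra k H]
variable {B : Type} [NonUnitalRing B] [Module k B] [SMulCommClass k B B] [IsScalarTower k B B]

/-- `B` is an `H`-module algebra (possibly nonunital) for the global action `gact`: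
`1 ▷ b = b`, `h ▷ (b c) = Σ (h₁ ▷ b)(h₂ ▷ c)` and `h ▷ (g ▷ b) = (h g) ▷ b`. -/
structure IsModuleAlgebra (gact : H →ₗ[k] B →ₗ[k] B) : Prop where
  one_act : ∀ b : B, gact 1 b = b
  act_mul : ∀ (h : H) (b c : B),
    gact h (b * c) =
      sweedler k H (((LinearMap.mul k B).comp (gact.flip b)).compl₂ (gact.flip c)) h
  act_act : ∀ (h g : H) (b : B), gact h (gact g b) = gact (h * g) b

end ModuleAlgebraPrelude

section ProjectedAction

variable {k : Type} [Field k] {H : Type} [Ring H] [HopfAlgebra k H]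

theorem LinearMap.map_sweedler {M N : Type} [AddCommGroup M] [Module k M] [AddCommGroup N]
    [Module k N] (ι : M →ₗ[k] N) (f : H →ₗ[k] H →ₗ[k] M) (h : H) :
    ι (sweedler k H f h) = sweedler k H (f.compr₂ ι) h := by
  rw [sweedler, sweedler, TensorProduct.lift_compr₂, LinearMap.comp_apply]

variable {B : Type} [NonUnitalRing B] [Module k B]
variable {gact : H →ₗ[k] B →ₗ[k] B} {A : NonUnitalSubalgebra k B} {π : B →ₗ[k] B}

noncomputable def projectedAction (hπA : ∀ (h : H), ∀ a ∈ A, π (gact h a) ∈ A) :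
    H →ₗ[k] A →ₗ[k] A :=
  LinearMap.codRestrict₂ ((gact.compl₂ A.toSubmodule.subtype).compr₂ π) A.toSubmodule.subtype
    Subtype.val_injective fun h a => by
      rw [Submodule.range_subtype]
      exact hπA h a a.2

variable (hπA : ∀ (h : H), ∀ a ∈ A, π (gact h a) ∈ A)

@[simp]
theorem coe_projectedAction_apply (h : H) (a : A) :
    (projectedAction hπA h a : B) = π (gact h a) :=
  LinearMap.codRestrict₂_apply (i := A.toSubmodule.subtype) _ _ _ h a

theorem projectedAction_one (hone : ∀ b : B, gact 1 b = b) (hπproj : ∀ a ∈ A, π a = a)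
    (a : A) : projectedAction hπA 1 a = a := by
  ext
  rw [coe_projectedAction_apply, hone, hπproj a a.2]

variable [SMulCommClass k B B] [IsScalarTower k B B]

theorem projectedAction_mul_projectedAction
    (hπcompat : ∀ (h g : H), ∀ a ∈ A, ∀ b ∈ A,
      π (gact h (a * π (gact g b))) =
        sweedler k H
          (((LinearMap.mul k B).comp (π.comp (gact.flip a))).compl₂
            ((π.comp (gact.flip b)).comp (LinearMap.mulRight k g))) h)
    (h g : H) (a b : A) :
    projectedAction hπA h (a * projectedAction hπA g b) =
      paRhs k H (LinearMap.mul k A) (projectedAction hπA) h g a b := by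
  -- both sides are compared in `B`, where `hπcompat` is exactly the identity to prove
  ext
  rw [coe_projectedAction_apply, NonUnitalSubalgebra.coe_mul, coe_projectedAction_apply,
    hπcompat h g a a.2 b b.2, paRhs]
  change _ = A.toSubmodule.subtype _
  rw [LinearMap.map_sweedler]
  congr 1
  ext x y
  simp

theorem isPartialAction_projectedAction (hone : ∀ b : B, gact 1 b = b)
    (hπproj : ∀ a ∈ A, π a = a)
    (hπcompat : ∀ (h g : H), ∀ a ∈ A, ∀ b ∈ A,
      π (gact h (a * π (gact g b))) =
        sweedler k H
          (((LinearMap.mul k B).comp (π.comp (gact.flip a))).compl₂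
            ((π.comp (gact.flip b)).comp (LinearMap.mulRight k g))) h) :
    IsPartialAction k H (projectedAction hπA) where
  one_act := projectedAction_one hπA hone hπproj
  act_assoc := projectedAction_mul_projectedAction hπA hπcompat

end ProjectedAction

section Stmt10

variable {k : Type} [Field k] {H : Type} [Ring H] [HopfAlgebra k H]
variable {B : Type} [NonUnitalRing B] [Module k B] [SMulCommClass k B B] [IsScalarTower k B B]

theorem projection_induces_partial_action_general
    (gact : H →ₗ[k] B →ₗ[k] B) (hma : IsModuleAlgebra k H gact)
    (A : NonUnitalSubalgebra k B)
    (π : B →ₗ[k] B)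
    (hπA : ∀ x ∈ Submodule.span k {y : B | ∃ (h : H), ∃ a ∈ A, y = gact h a}, π x ∈ A)
    (hπproj : ∀ a ∈ A, π a = a)
    (hπcompat : ∀ (h g : H), ∀ a ∈ A, ∀ b ∈ A,
      π (gact h (a * π (gact g b))) =
        sweedler k H
          (((LinearMap.mul k B).comp (π.comp (gact.flip a))).compl₂
            ((π.comp (gact.flip b)).comp (LinearMap.mulRight k g))) h) :
    ∃ pact : H →ₗ[k] ↥A →ₗ[k] ↥A,
      (∀ (h : H) (a : ↥A), (pact h a : B) = π (gact h (a : B))) ∧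
      IsPartialAction k H pact := by
  have hπ_mem : ∀ (h : H), ∀ a ∈ A, π (gact h a) ∈ A := fun h a ha =>
    hπA _ (Submodule.subset_span ⟨h, a, ha, rfl⟩)
  exact ⟨projectedAction hπ_mem, coe_projectedAction_apply hπ_mem,
    isPartialAction_projectedAction hπ_mem hma.one_act hπproj hπcompat⟩

/-- Let `B` be an `H`-module algebra with action `▷` and `A` an ideal of
`B`.  If there is a linear projection `π : H ▷ A → H ▷ A`, with image `A`, such that
`π(h ▷ (a π(g ▷ b))) = Σ π(h₁ ▷ a) π(h₂ g ▷ b)` for all `h, g ∈ H`, `a, b ∈ A`, then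
`h ⇀ a = π(h ▷ a)` defines a partial action of `H` on `A`. -/
theorem projection_induces_partial_action
    (gact : H →ₗ[k] B →ₗ[k] B) (hma : IsModuleAlgebra k H gact)
    (A : NonUnitalSubalgebra k B)
    (hIdl : ∀ (b : B) (x : B), x ∈ A → b * x ∈ A ∧ x * b ∈ A)
    (π : B →ₗ[k] B)
    (hπA : ∀ x ∈ Submodule.span k {y : B | ∃ (h : H), ∃ a ∈ A, y = gact h a}, π x ∈ A)
    (hπproj : ∀ a ∈ A, π a = a)
    (hπcompat : ∀ (h g : H), ∀ a ∈ A, ∀ b ∈ A,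
      π (gact h (a * π (gact g b))) =
        sweedler k H
          (((LinearMap.mul k B).comp (π.comp (gact.flip a))).compl₂
            ((π.comp (gact.flip b)).comp (LinearMap.mulRight k g))) h) :
    ∃ pact : H →ₗ[k] ↥A →ₗ[k] ↥A,
      (∀ (h : H) (a : ↥A), (pact h a : B) = π (gact h (a : B))) ∧
      IsPartialAction k H pact :=
  projection_induces_partial_action_general gact hma A π hπA hπproj hπcompat

end Stmt10
end

section
/- Let ·: H⊗A → A be a partial action and (B,θ) a globalization with global action ▷. Then: (1) if r(B)=0 then r(A)=0; (2) if r(B)=0 then (B,θ) is a minimal globalization; (3) if r(A)=0, H has bijective antipode, and (B,θ) is minimal, then r(B)=0. -/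
open TensorProduct

section GlobalizationPrelude

variable (k : Type) [Field k] (H : Type) [Ring H] [HopfAlgebra k H]
variable {A : Type} [NonUnitalRing A] [Module k A] [SMulCommClass k A A] [IsScalarTower k A A]
variable {B : Type} [NonUnitalRing B] [Module k B] [SMulCommClass k B B] [IsScalarTower k B B]

/-- `(B, θ)` is a globalization of the partial action `act` of `H` on `A`:
`B` is an `H`-module algebra with action `gact`, `θ : A → B` is an algebra monomorphism,
`θ((h·a) b) = (h ▷ θ(a)) θ(b)` and `θ(b (h·a)) = θ(b)(h ▷ θ(a))`, `B = H ▷ θ(A)`, and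
`h • θ(a) := θ(h · a)` defines a partial action of `H` on `θ(A)`. -/
structure IsGlobalization (act : H →ₗ[k] A →ₗ[k] A) (gact : H →ₗ[k] B →ₗ[k] B)
    (θ : A →ₗ[k] B) : Prop where
  moduleAlgebra : IsModuleAlgebra k H gact
  θ_inj : Function.Injective θ
  θ_mul : ∀ a b : A, θ (a * b) = θ a * θ b
  compat_left : ∀ (h : H) (a b : A), θ (act h a * b) = gact h (θ a) * θ b
  compat_right : ∀ (h : H) (a b : A), θ (b * act h a) = θ b * gact h (θ a)
  spanning : ∀ x : B, x ∈ Submodule.span k {y : B | ∃ (h : H) (a : A), y = gact h (θ a)}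
  induced : IsPartialAction k H act

/-- The globalization `(B, θ)` is minimal: if `Σᵢ (g hᵢ) · aᵢ = 0` for all `g ∈ H`, then
`Σᵢ hᵢ ▷ θ(aᵢ) = 0`. -/
def IsMinimalGlobalization (act : H →ₗ[k] A →ₗ[k] A) (gact : H →ₗ[k] B →ₗ[k] B)
    (θ : A →ₗ[k] B) : Prop :=
  ∀ (n : ℕ) (h : Fin n → H) (a : Fin n → A),
    (∀ g : H, ∑ i, act (g * h i) (a i) = 0) → ∑ i, gact (h i) (θ (a i)) = 0

end GlobalizationPrelude
/-! The identities `(g ▷ x) y = Σ g₁ ▷ (x (S g₂ ▷ y))` and, when `S` is bijective,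
`x (g ▷ y) = Σ g₂ ▷ ((S⁻¹ g₁ ▷ x) y)` move the global action across a product. Since `B` is
spanned by the `h ▷ θ(a)`, the first shows that `x ∈ r(B)` as soon as `θ(A) (H ▷ x) = 0`, and
`θ(c) (q ▷ Σ hᵢ ▷ θ(aᵢ)) = θ(c Σ (q hᵢ) · aᵢ)` translates this into a statement about the partial
action; the second shows that `r(B)` is stable under `▷`. -/

section RightAnnihilator

open Coalgebra HopfAlgebra LinearMap

lemma Coalgebra.sum_counit_right_smul_left {R C ι : Type*} [CommSemiring R] [AddCommMonoid C]
    [Module R C] [Coalgebra R C] {c : C} (r : Repr R c ι) :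
    ∑ i ∈ r.index, counit (R := R) (r.right i) • r.left i = c := by
  simpa only [map_sum, TensorProduct.lift.tmul, flip_apply, lsmul_apply, one_smul]
    using congr(TensorProduct.lift (lsmul R C).flip $(sum_tmul_counit_eq (R := R) r))

lemma HopfAlgebra.sum_right_mul_antipode_symm_eq_smul {R A ι : Type*} [CommSemiring R]
    [Semiring A] [HopfAlgebra R A] (hS : Function.Bijective (antipode R (A := A))) {a : A}
    (r : Repr R a ι) :
    ∑ i ∈ r.index, r.right i * (LinearEquiv.ofBijective _ hS).symm (r.left i) =
      counit (R := R) a • 1 := by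
  apply hS.injective
  simp only [map_sum, map_smul, antipode_one, antipode_mul_antidistrib,
    LinearEquiv.apply_ofBijective_symm_apply]
  exact sum_mul_antipode_eq_smul r

namespace IsModuleAlgebra

variable {k H B ι : Type} [Field k] [Ring H] [HopfAlgebra k H]
  [NonUnitalRing B] [Module k B] [SMulCommClass k B B] [IsScalarTower k B B]
  {gact : H →ₗ[k] B →ₗ[k] B}

lemma act_mul_eq_sum (hma : IsModuleAlgebra k H gact) {h : H} (r : Repr k h ι) (x y : B) :
    gact h (x * y) = ∑ i ∈ r.index, gact (r.left i) x * gact (r.right i) y := by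
  rw [hma.act_mul, sweedler, ← r.eq, map_sum]
  simp

lemma act_mul_eq_sum_act_mul_act_antipode (hma : IsModuleAlgebra k H gact) {g : H}
    (r : Repr k g ι) (x y : B) :
    gact g x * y = ∑ i ∈ r.index, gact (r.left i) (x * gact (antipode k (r.right i)) y) := by
  let ψ : H ⊗[k] (H ⊗[k] H) →ₗ[k] B :=
    mul' k B ∘ₗ
      TensorProduct.map (gact.flip x) (gact.flip y ∘ₗ mul' k H ∘ₗ lTensor H (antipode k))
  have hψ : ∀ u v w : H, ψ (u ⊗ₜ (v ⊗ₜ w)) = gact u x * gact (v * antipode k w) y := by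
    simp [ψ]
  have coassoc :=
    congr(ψ $(sum_tmul_tmul_eq r (fun i ↦ ℛ k (r.left i)) (fun i ↦ ℛ k (r.right i))))
  simp only [map_sum, hψ] at coassoc
  symm
  calc ∑ i ∈ r.index, gact (r.left i) (x * gact (antipode k (r.right i)) y)
      = ∑ i ∈ r.index, ∑ j ∈ (ℛ k (r.left i)).index, gact ((ℛ k (r.left i)).left j) x *
          gact ((ℛ k (r.left i)).right j * antipode k (r.right i)) y := by
        simp only [hma.act_mul_eq_sum (ℛ k _), hma.act_act]
    _ = ∑ i ∈ r.index, gact (r.left i) x * gact (counit (R := k) (r.right i) • 1) y := by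
        simp only [coassoc, ← Finset.mul_sum, ← LinearMap.sum_apply, ← map_sum,
          sum_mul_antipode_eq_smul]
    _ = gact g x * y := by
        conv_rhs =>
          rw [← sum_counit_right_smul_left r, map_sum, LinearMap.sum_apply, Finset.sum_mul]
        simp only [map_smul, LinearMap.smul_apply, hma.one_act, mul_smul_comm, smul_mul_assoc]

lemma mul_act_eq_sum_act_antipode_symm_mul (hma : IsModuleAlgebra k H gact)
    (hS : Function.Bijective (antipode k (A := H))) {g : H} (r : Repr k g ι) (x y : B) :
    x * gact g y = ∑ i ∈ r.index,
      gact (r.right i) (gact ((LinearEquiv.ofBijective _ hS).symm (r.left i)) x * y) := by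
  set S' := (LinearEquiv.ofBijective _ hS).symm
  let ψ : H ⊗[k] (H ⊗[k] H) →ₗ[k] B :=
    mul' k B ∘ₗ
      TensorProduct.map (gact.flip x ∘ₗ mul' k H ∘ₗ lTensor H S'.toLinearMap ∘ₗ
        (TensorProduct.comm k H H).toLinearMap) (gact.flip y) ∘ₗ
      (TensorProduct.assoc k H H H).symm.toLinearMap
  have hψ : ∀ u v w : H, ψ (u ⊗ₜ (v ⊗ₜ w)) = gact (v * S' u) x * gact w y := by
    simp [ψ]
  have coassoc :=
    congr(ψ $(sum_tmul_tmul_eq r (fun i ↦ ℛ k (r.left i)) (fun i ↦ ℛ k (r.right i))))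
  simp only [map_sum, hψ] at coassoc
  symm
  calc ∑ i ∈ r.index, gact (r.right i) (gact (S' (r.left i)) x * y)
      = ∑ i ∈ r.index, ∑ j ∈ (ℛ k (r.right i)).index,
          gact ((ℛ k (r.right i)).left j * S' (r.left i)) x *
            gact ((ℛ k (r.right i)).right j) y := by
        simp only [hma.act_mul_eq_sum (ℛ k _), hma.act_act]
    _ = ∑ i ∈ r.index, gact (counit (R := k) (r.left i) • 1) x * gact (r.right i) y := by
        simp only [← coassoc, ← Finset.sum_mul, ← LinearMap.sum_apply, ← map_sum,
          S', sum_right_mul_antipode_symm_eq_smul]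
    _ = x * gact g y := by
        conv_rhs => rw [← sum_counit_smul r, map_sum, LinearMap.sum_apply, Finset.mul_sum]
        simp only [map_smul, LinearMap.smul_apply, hma.one_act, mul_smul_comm, smul_mul_assoc]

lemma mul_act_eq_zero_of_forall_mul_eq_zero (hma : IsModuleAlgebra k H gact)
    (hS : Function.Bijective (antipode k (A := H))) {b : B} (hb : ∀ c, c * b = 0)
    (x : B) (q : H) :
    x * gact q b = 0 := by
  rw [hma.mul_act_eq_sum_act_antipode_symm_mul hS (ℛ k q)]
  exact Finset.sum_eq_zero fun i _ ↦ by rw [hb, map_zero]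

end IsModuleAlgebra

/-- `r(R) = 0`: the right annihilator of `R` is trivial. -/
def HasTrivialRightAnnihilator (R : Type*) [Mul R] [Zero R] : Prop :=
  ∀ b : R, (∀ c : R, c * b = 0) → b = 0

namespace IsGlobalization

variable {k H A B : Type} [Field k] [Ring H] [HopfAlgebra k H]
  [NonUnitalRing A] [Module k A] [SMulCommClass k A A] [IsScalarTower k A A]
  [NonUnitalRing B] [Module k B] [SMulCommClass k B B] [IsScalarTower k B B]
  {act : H →ₗ[k] A →ₗ[k] A} {gact : H →ₗ[k] B →ₗ[k] B} {θ : A →ₗ[k] B}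

lemma mul_eq_zero_of_forall_act_mul_eq_zero (hglob : IsGlobalization k H act gact θ) {x : B}
    (hx : ∀ h a, gact h (θ a) * x = 0) (c : B) : c * x = 0 := by
  have : Submodule.span k {y : B | ∃ h a, y = gact h (θ a)} ≤ ker (mulRight k x) :=
    Submodule.span_le.mpr fun _ ⟨h, a, hy⟩ ↦ hy ▸ hx h a
  exact this (hglob.spanning c)

lemma exists_eq_sum (hglob : IsGlobalization k H act gact θ) (x : B) :
    ∃ (n : ℕ) (h : Fin n → H) (a : Fin n → A), x = ∑ i, gact (h i) (θ (a i)) := by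
  obtain ⟨n, f, y, hy⟩ := Submodule.mem_span_set'.mp (hglob.spanning x)
  choose h a hya using fun i ↦ (y i).2
  refine ⟨n, h, fun i ↦ f i • a i, hy.symm.trans (Finset.sum_congr rfl fun i _ ↦ ?_)⟩
  rw [hya, map_smul, map_smul]

lemma θ_mul_act_sum (hglob : IsGlobalization k H act gact θ) {n : ℕ} (h : Fin n → H)
    (a : Fin n → A) (b : A) (q : H) :
    θ b * gact q (∑ i, gact (h i) (θ (a i))) = θ (b * ∑ i, act (q * h i) (a i)) := by
  simp only [map_sum, Finset.mul_sum, hglob.moduleAlgebra.act_act, hglob.compat_right]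

theorem hasTrivialRightAnnihilator_of_global (hglob : IsGlobalization k H act gact θ)
    (hB : HasTrivialRightAnnihilator B) : HasTrivialRightAnnihilator A := by
  intro a ha
  refine (map_eq_zero_iff θ hglob.θ_inj).mp (hB _ (hglob.mul_eq_zero_of_forall_act_mul_eq_zero
    fun h b ↦ ?_))
  rw [← hglob.compat_left, ha, map_zero]

theorem isMinimalGlobalization_of_hasTrivialRightAnnihilator
    (hglob : IsGlobalization k H act gact θ) (hB : HasTrivialRightAnnihilator B) : IsMinimalGlobalization k H act gact θ := by
  intro n h a hzero
  refine hB _ (hglob.mul_eq_zero_of_forall_act_mul_eq_zero fun g b ↦ ?_)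
  rw [hglob.moduleAlgebra.act_mul_eq_sum_act_mul_act_antipode (ℛ k g)]
  refine Finset.sum_eq_zero fun i _ ↦ ?_
  rw [hglob.θ_mul_act_sum, hzero, mul_zero, map_zero, map_zero]

theorem hasTrivialRightAnnihilator_global_of_isMinimal (hglob : IsGlobalization k H act gact θ)
    (hA : HasTrivialRightAnnihilator A) (hS : Function.Bijective (antipode k (A := H)))
    (hmin : IsMinimalGlobalization k H act gact θ) : HasTrivialRightAnnihilator B := by
  intro x hx
  obtain ⟨n, h, a, rfl⟩ := hglob.exists_eq_sum x
  refine hmin n h a fun q ↦ hA _ fun c ↦ hglob.θ_inj ?_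
  rw [← hglob.θ_mul_act_sum, map_zero,
    hglob.moduleAlgebra.mul_act_eq_zero_of_forall_mul_eq_zero hS hx]

end IsGlobalization

end RightAnnihilator

section Stmt11

variable {k : Type} [Field k] {H : Type} [Ring H] [HopfAlgebra k H]
variable {A : Type} [NonUnitalRing A] [Module k A] [SMulCommClass k A A] [IsScalarTower k A A]
variable {B : Type} [NonUnitalRing B] [Module k B] [SMulCommClass k B B] [IsScalarTower k B B]

/-- Let `(B, θ)` be a globalization of the partial action `act` on `A`.
(1) If `r(B) = 0` then `r(A) = 0`; (2) if `r(B) = 0` then `(B, θ)` is minimal;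
(3) if `r(A) = 0`, the antipode of `H` is bijective and `(B, θ)` is minimal, then `r(B) = 0`. -/
theorem globalization_right_annihilator
    (act : H →ₗ[k] A →ₗ[k] A) (gact : H →ₗ[k] B →ₗ[k] B) (θ : A →ₗ[k] B)
    (hglob : IsGlobalization k H act gact θ) :
    ((∀ b : B, (∀ c : B, c * b = 0) → b = 0) → (∀ a : A, (∀ c : A, c * a = 0) → a = 0)) ∧
    ((∀ b : B, (∀ c : B, c * b = 0) → b = 0) → IsMinimalGlobalization k H act gact θ) ∧
    ((∀ a : A, (∀ c : A, c * a = 0) → a = 0) →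
      Function.Bijective (HopfAlgebra.antipode (R := k) (A := H)) →
      IsMinimalGlobalization k H act gact θ →
      (∀ b : B, (∀ c : B, c * b = 0) → b = 0)) :=
  ⟨hglob.hasTrivialRightAnnihilator_of_global,
    hglob.isMinimalGlobalization_of_hasTrivialRightAnnihilator,
    hglob.hasTrivialRightAnnihilator_global_of_isMinimal⟩

end Stmt11
end
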